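/- arXiv:1902.01625 — 12 statements merged into one kernel-verified Lean document; each statement's English description precedes it below -/
import Mathlib

section
/- Let A be an n×n real matrix that is Lyapunov stable, i.e., there exists an n×n real positive definite matrix V with A V + V Aᵀ negative definite, and let L be an n×m real matrix with linearly independent columns (so m ≤ n). Then there exist real matrices P of size (n−m)×n, P̄ of size m×n, P† of size n×(n−m), and P̄† of size n×m such that: (C0) P P† = I_{n−m} and P̄ P̄† = I_m (P and P̄ are right-invertible with right-inverses P† and P̄†); (C1) P† P + P̄† P̄ = I_n; (C2) P A P† + (P A P†)ᵀ and P̄ A P̄† + (P̄ A P̄†)ᵀ are negative definite, so in particular every complex eigenvalue of P A P† and of P̄ A P̄† has negative real part; (C3) P L = 0 and P̄ L is invertible. -/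
/-!
Write `V = W²` with `W` the symmetric square root of the Lyapunov matrix. The similarity
`Ã = W⁻¹ A W` has negative definite symmetric part `W⁻¹ (A V + V Aᵀ) W⁻¹`. Take orthonormal
bases `Q` of the column space of `W⁻¹ L` and `Q'` of its orthogonal complement, and put
`P = Q'ᵀ W⁻¹`, `P̄ = Qᵀ W⁻¹`, `P† = W Q'`, `P̄† = W Q`. Then `P A P† = Q'ᵀ Ã Q'` and
`P̄ A P̄† = Qᵀ Ã Q` are compressions of `Ã`, which keep a negative definite symmetric part, and
a matrix with negative definite symmetric part has its spectrum in the open left half-plane.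
-/

open Matrix Module
open scoped ComplexOrder

section Spectrum

variable {n : Type*} [Fintype n] [DecidableEq n]

theorem Matrix.PosDef.exists_sqrt {𝕜 : Type*} [RCLike 𝕜] {V : Matrix n n 𝕜} (hV : V.PosDef) :
    ∃ W : Matrix n n 𝕜, W.IsHermitian ∧ W * W = V ∧ IsUnit W := by
  open scoped MatrixOrder in
  exact ⟨CFC.sqrt V, (CFC.sqrt_nonneg V).posSemidef.isHermitian,
    CFC.sqrt_mul_sqrt_self V hV.posSemidef.nonneg,
    (CFC.isUnit_sqrt_iff V hV.posSemidef.nonneg).2 hV.isUnit⟩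

theorem Matrix.PosDef.map_algebraMap {𝕜 : Type*} [RCLike 𝕜] {N : Matrix n n ℝ}
    (hN : N.PosDef) : (N.map (algebraMap ℝ 𝕜)).PosDef := by
  obtain ⟨W, hWh, rfl, hW⟩ := hN.exists_sqrt
  have hmap : (W * W).map (algebraMap ℝ 𝕜) =
      (W.map (algebraMap ℝ 𝕜))ᴴ * W.map (algebraMap ℝ 𝕜) := by
    nth_rw 1 [← hWh.eq, Matrix.map_mul, conjTranspose_map _ fun x => by simp]
  rw [hmap]
  exact .conjTranspose_mul_self _
    (mulVec_injective_iff_isUnit.2 (hW.map (algebraMap ℝ 𝕜).mapMatrix))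

theorem Matrix.re_lt_zero_of_mem_spectrum_of_posDef_neg_add_conjTranspose {𝕜 : Type*}
    [RCLike 𝕜] {M : Matrix n n 𝕜} (h : (-(M + Mᴴ)).PosDef) {μ : 𝕜} (hμ : μ ∈ spectrum 𝕜 M) :
    RCLike.re μ < 0 := by
  rw [← spectrum_toLin', ← Module.End.hasEigenvalue_iff_mem_spectrum] at hμ
  obtain ⟨v, hv⟩ := hμ.exists_hasEigenvector
  have hMv : M *ᵥ v = μ • v := Module.End.mem_eigenspace_iff.mp hv.1
  have hquad : star v ⬝ᵥ (-(M + Mᴴ)) *ᵥ v = (-(2 * RCLike.re μ) : ℝ) * (star v ⬝ᵥ v) := by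
    rw [neg_mulVec, add_mulVec, dotProduct_neg, dotProduct_add, dotProduct_mulVec (star v) Mᴴ,
      ← star_mulVec, hMv, star_smul, dotProduct_smul, smul_dotProduct]
    simp only [smul_eq_mul, RCLike.star_def]
    push_cast
    rw [← RCLike.add_conj]
    ring
  have hpos := (RCLike.pos_iff.mp (hquad ▸ h.dotProduct_mulVec_pos hv.2)).1
  rw [RCLike.re_ofReal_mul] at hpos
  nlinarith [(RCLike.pos_iff.mp (dotProduct_star_self_pos_iff.mpr hv.2)).1]

theorem Matrix.re_lt_zero_of_mem_spectrum_map_of_posDef_neg_add_transpose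
    {M : Matrix n n ℝ} (h : (-(M + Mᵀ)).PosDef) :
    ∀ μ ∈ spectrum ℂ (M.map (algebraMap ℝ ℂ)), μ.re < 0 := by
  intro μ hμ
  refine re_lt_zero_of_mem_spectrum_of_posDef_neg_add_conjTranspose ?_ hμ
  have hmap : -(M.map (algebraMap ℝ ℂ) + (M.map (algebraMap ℝ ℂ))ᴴ) =
      (-(M + Mᵀ)).map (algebraMap ℝ ℂ) := by
    ext
    simp
  rw [hmap]
  exact h.map_algebraMap

end Spectrum

section SymmetricPart

variable {n k : Type*} [Fintype n] [Fintype k]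

theorem Matrix.PosDef.neg_add_transpose_conj {M : Matrix n n ℝ} (h : (-(M + Mᵀ)).PosDef)
    {B : Matrix n k ℝ} (hB : Function.Injective B.mulVec) :
    (-(Bᵀ * M * B + (Bᵀ * M * B)ᵀ)).PosDef := by
  have hconj : -(Bᵀ * M * B + (Bᵀ * M * B)ᵀ) = Bᴴ * (-(M + Mᵀ)) * B := by
    simp only [conjTranspose_eq_transpose_of_trivial, transpose_mul, transpose_transpose,
      Matrix.mul_neg, Matrix.neg_mul, Matrix.mul_add, Matrix.add_mul, Matrix.mul_assoc]
  rw [hconj]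
  exact h.conjTranspose_mul_mul_same hB

theorem Matrix.mulVec_injective_of_transpose_mul_self_eq_one {R : Type*} [CommSemiring R]
    [DecidableEq k] {B : Matrix n k R} (hB : Bᵀ * B = 1) : Function.Injective B.mulVec :=
  fun x y hxy => by
  simpa [mulVec_mulVec, hB] using congrArg (Bᵀ *ᵥ ·) hxy

theorem Matrix.PosDef.neg_add_transpose_sqrt_conj [DecidableEq n] {A V W : Matrix n n ℝ}
    (hAV : (-(A * V + V * Aᵀ)).PosDef) (hWt : Wᵀ = W) (hWV : W * W = V) (hW : IsUnit W) :
    (-(W⁻¹ * A * W + (W⁻¹ * A * W)ᵀ)).PosDef := by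
  have hdet : IsUnit W.det := (isUnit_iff_isUnit_det W).mp hW
  have hWi : (W⁻¹)ᵀ = W⁻¹ := by rw [transpose_nonsing_inv, hWt]
  have hAVt : V * Aᵀ = (A * V)ᵀ := by rw [transpose_mul, ← hWV, transpose_mul, hWt]
  have hsim : W⁻¹ᵀ * (A * V) * W⁻¹ = W⁻¹ * A * W := by
    rw [hWi, ← hWV, ← Matrix.mul_assoc, ← Matrix.mul_assoc,
      Matrix.mul_nonsing_inv_cancel_right _ _ hdet]
  rw [hAVt] at hAV
  simpa only [hsim] using hAV.neg_add_transpose_conj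
    (mulVec_injective_iff_isUnit.2 (isUnit_nonsing_inv_iff.2 hW))

end SymmetricPart

section Complement

variable {K : Type*} [Field K] {n ι κ : Type*} [Fintype n] [Fintype ι] [Fintype κ]
  [DecidableEq n] [DecidableEq ι]

theorem Matrix.mul_transpose_add_mul_transpose_eq_one [DecidableEq κ] (e : n ≃ ι ⊕ κ)
    {Q : Matrix n ι K} {Q' : Matrix n κ K} (hQ : Qᵀ * Q = 1) (hQ' : Q'ᵀ * Q' = 1)
    (hQQ' : Qᵀ * Q' = 0) : Q * Qᵀ + Q' * Q'ᵀ = 1 := by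
  have hQ'Q : Q'ᵀ * Q = 0 := by rw [← transpose_transpose Q, ← transpose_mul, hQQ', transpose_zero]
  rw [← fromCols_mul_fromRows, fromCols_mul_fromRows_eq_one_comm e, fromRows_mul_fromCols, hQ, hQ',
    hQQ', hQ'Q, fromBlocks_one]

theorem Matrix.isUnit_transpose_mul_of_transpose_mul_eq_zero {Q : Matrix n ι K}
    {Q' : Matrix n κ K} {L : Matrix n ι K} (hsum : Q * Qᵀ + Q' * Q'ᵀ = 1) (hQ'L : Q'ᵀ * L = 0)
    (hL : Function.Injective L.mulVec) : IsUnit (Qᵀ * L) := by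
  have hfac : Q * (Qᵀ * L) = L := by
    calc Q * (Qᵀ * L) = (Q * Qᵀ + Q' * Q'ᵀ) * L := by
          rw [Matrix.add_mul, Matrix.mul_assoc, Matrix.mul_assoc Q', hQ'L, Matrix.mul_zero,
            add_zero]
      _ = L := by rw [hsum, Matrix.one_mul]
  refine mulVec_injective_iff_isUnit.1 fun x y hxy => hL ?_
  simpa only [mulVec_mulVec, hfac] using congrArg (Q *ᵥ ·) hxy

end Complement

theorem EuclideanSpace.transpose_of_mul_of {n ι κ : Type*} [Fintype n] (v : ι → EuclideanSpace ℝ n)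
    (w : κ → EuclideanSpace ℝ n) :
    (of fun i a => v a i)ᵀ * (of fun i b => w b i) = of fun a b => inner ℝ (v a) (w b) := by
  ext a b
  simp [mul_apply, EuclideanSpace.inner_eq_star_dotProduct, dotProduct, mul_comm]

theorem exists_orthonormal_split {n m : ℕ} {L : Matrix (Fin n) (Fin m) ℝ}
    (hL : LinearIndependent ℝ L.col) :
    ∃ (Q : Matrix (Fin n) (Fin m) ℝ) (Q' : Matrix (Fin n) (Fin (n - m)) ℝ),
      Qᵀ * Q = 1 ∧ Q'ᵀ * Q' = 1 ∧ Q * Qᵀ + Q' * Q'ᵀ = 1 ∧ Q'ᵀ * L = 0 ∧ IsUnit (Qᵀ * L) := by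
  let ℓ : Fin m → EuclideanSpace ℝ (Fin n) := fun j => WithLp.toLp 2 (L.col j)
  let S := Submodule.span ℝ (Set.range ℓ)
  have hℓ : LinearIndependent ℝ ℓ :=
    hL.map' (WithLp.linearEquiv 2 ℝ (Fin n → ℝ)).symm.toLinearMap (LinearEquiv.ker _)
  have hS : finrank ℝ S = m := by rw [finrank_span_eq_card hℓ, Fintype.card_fin]
  have hdim : m + finrank ℝ Sᗮ = n := by
    rw [← hS, S.finrank_add_finrank_orthogonal, finrank_euclideanSpace_fin]
  have hS' : finrank ℝ Sᗮ = n - m := by omega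
  let b := (stdOrthonormalBasis ℝ S).reindex (finCongr hS)
  let b' := (stdOrthonormalBasis ℝ Sᗮ).reindex (finCongr hS')
  let Q : Matrix (Fin n) (Fin m) ℝ := of fun i a => (b a : EuclideanSpace ℝ (Fin n)) i
  let Q' : Matrix (Fin n) (Fin (n - m)) ℝ := of fun i a => (b' a : EuclideanSpace ℝ (Fin n)) i
  have hQ : Qᵀ * Q = 1 := by
    rw [EuclideanSpace.transpose_of_mul_of]
    exact gram_eq_one_iff_orthonormal.2 (b.orthonormal.comp_linearIsometry S.subtypeₗᵢ)
  have hQ' : Q'ᵀ * Q' = 1 := by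
    rw [EuclideanSpace.transpose_of_mul_of]
    exact gram_eq_one_iff_orthonormal.2 (b'.orthonormal.comp_linearIsometry Sᗮ.subtypeₗᵢ)
  have hQQ' : Qᵀ * Q' = 0 := by
    rw [EuclideanSpace.transpose_of_mul_of]
    ext a c
    exact Submodule.inner_right_of_mem_orthogonal (b a).2 (b' c).2
  have hQ'L : Q'ᵀ * L = 0 := by
    change Q'ᵀ * (of fun i j => ℓ j i) = 0
    rw [EuclideanSpace.transpose_of_mul_of]
    ext a j
    exact Submodule.inner_left_of_mem_orthogonal
      (Submodule.subset_span (Set.mem_range_self j)) (b' a).2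
  have hsum := mul_transpose_add_mul_transpose_eq_one
    ((finCongr (by omega)).trans finSumFinEquiv.symm) hQ hQ' hQQ'
  exact ⟨Q, Q', hQ, hQ', hsum, hQ'L,
    isUnit_transpose_mul_of_transpose_mul_eq_zero hsum hQ'L (mulVec_injective_iff.2 hL)⟩

theorem stmt_3_general (n m : ℕ)
    (A : Matrix (Fin n) (Fin n) ℝ) (L : Matrix (Fin n) (Fin m) ℝ)
    (hLyap : ∃ V : Matrix (Fin n) (Fin n) ℝ, V.PosDef ∧ (-(A * V + V * Aᵀ)).PosDef)
    (hL : LinearIndependent ℝ (fun j : Fin m => Lᵀ j)) :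
    ∃ (P : Matrix (Fin (n - m)) (Fin n) ℝ) (Pbar : Matrix (Fin m) (Fin n) ℝ)
      (Pdag : Matrix (Fin n) (Fin (n - m)) ℝ) (Pbardag : Matrix (Fin n) (Fin m) ℝ),
      -- (C0) right-invertibility
      P * Pdag = 1 ∧ Pbar * Pbardag = 1 ∧
      -- (C1)
      Pdag * P + Pbardag * Pbar = 1 ∧
      -- (C2) negative definite symmetric parts
      (-(P * A * Pdag + (P * A * Pdag)ᵀ)).PosDef ∧
      (-(Pbar * A * Pbardag + (Pbar * A * Pbardag)ᵀ)).PosDef ∧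
      -- (C2) in particular, Hurwitz stability
      (∀ μ ∈ spectrum ℂ ((P * A * Pdag).map (algebraMap ℝ ℂ)), μ.re < 0) ∧
      (∀ μ ∈ spectrum ℂ ((Pbar * A * Pbardag).map (algebraMap ℝ ℂ)), μ.re < 0) ∧
      -- (C3)
      P * L = 0 ∧ IsUnit (Pbar * L) := by
  obtain ⟨V, hV, hAV⟩ := hLyap
  obtain ⟨W, hWh, hWV, hW⟩ := hV.exists_sqrt
  have hdet : IsUnit W.det := (isUnit_iff_isUnit_det W).mp hW
  have hÃ := hAV.neg_add_transpose_sqrt_conj (by simpa using hWh.eq) hWV hW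
  have hWL : LinearIndependent ℝ (W⁻¹ * L).col := by
    have hcomp : (W⁻¹ * L).mulVec = W⁻¹.mulVec ∘ L.mulVec :=
      funext fun x => (mulVec_mulVec x _ _).symm
    rw [← mulVec_injective_iff, hcomp]
    exact (mulVec_injective_iff_isUnit.2 (isUnit_nonsing_inv_iff.2 hW)).comp
      (mulVec_injective_iff.2 hL)
  obtain ⟨Q, Q', hQ, hQ', hsum, hQ'L, hQL⟩ := exists_orthonormal_split hWL
  have hcompress {k : ℕ} (B : Matrix (Fin n) (Fin k) ℝ) :
      Bᵀ * W⁻¹ * A * (W * B) = Bᵀ * (W⁻¹ * A * W) * B := by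
    simp only [Matrix.mul_assoc]
  have hP := hcompress Q' ▸ hÃ.neg_add_transpose_conj
    (mulVec_injective_of_transpose_mul_self_eq_one hQ')
  have hPbar := hcompress Q ▸ hÃ.neg_add_transpose_conj
    (mulVec_injective_of_transpose_mul_self_eq_one hQ)
  refine ⟨Q'ᵀ * W⁻¹, Qᵀ * W⁻¹, W * Q', W * Q, ?_, ?_, ?_, hP, hPbar,
    re_lt_zero_of_mem_spectrum_map_of_posDef_neg_add_transpose hP,
    re_lt_zero_of_mem_spectrum_map_of_posDef_neg_add_transpose hPbar, ?_, ?_⟩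
  · rw [Matrix.mul_assoc, nonsing_inv_mul_cancel_left _ _ hdet, hQ']
  · rw [Matrix.mul_assoc, nonsing_inv_mul_cancel_left _ _ hdet, hQ]
  · calc W * Q' * (Q'ᵀ * W⁻¹) + W * Q * (Qᵀ * W⁻¹) = W * (Q * Qᵀ + Q' * Q'ᵀ) * W⁻¹ := by
          simp only [Matrix.mul_add, Matrix.add_mul, Matrix.mul_assoc, add_comm]
      _ = 1 := by rw [hsum, Matrix.mul_one, mul_nonsing_inv _ hdet]
  · rw [Matrix.mul_assoc, hQ'L]
  · rwa [Matrix.mul_assoc]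

/-- Lemma 3 (lemP) of the paper: if `A` is Lyapunov stable and `L` has linearly independent
columns, there exist right-invertible `P`, `P̄` with right-inverses `P†`, `P̄†` such that
`P† P + P̄† P̄ = I`, the compressions `P A P†` and `P̄ A P̄†` have negative definite symmetric
parts (hence Hurwitz), `P L = 0`, and `P̄ L` is invertible. -/
theorem stmt_3 (n m : ℕ) (hm : m ≤ n)
    (A : Matrix (Fin n) (Fin n) ℝ) (L : Matrix (Fin n) (Fin m) ℝ)
    (hLyap : ∃ V : Matrix (Fin n) (Fin n) ℝ, V.PosDef ∧ (-(A * V + V * Aᵀ)).PosDef)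
    (hL : LinearIndependent ℝ (fun j : Fin m => Lᵀ j)) :
    ∃ (P : Matrix (Fin (n - m)) (Fin n) ℝ) (Pbar : Matrix (Fin m) (Fin n) ℝ)
      (Pdag : Matrix (Fin n) (Fin (n - m)) ℝ) (Pbardag : Matrix (Fin n) (Fin m) ℝ),
      -- (C0) right-invertibility
      P * Pdag = 1 ∧ Pbar * Pbardag = 1 ∧
      -- (C1)
      Pdag * P + Pbardag * Pbar = 1 ∧
      -- (C2) negative definite symmetric parts
      (-(P * A * Pdag + (P * A * Pdag)ᵀ)).PosDef ∧
      (-(Pbar * A * Pbardag + (Pbar * A * Pbardag)ᵀ)).PosDef ∧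
      -- (C2) in particular, Hurwitz stability
      (∀ μ ∈ spectrum ℂ ((P * A * Pdag).map (algebraMap ℝ ℂ)), μ.re < 0) ∧
      (∀ μ ∈ spectrum ℂ ((Pbar * A * Pbardag).map (algebraMap ℝ ℂ)), μ.re < 0) ∧
      -- (C3)
      P * L = 0 ∧ IsUnit (Pbar * L) :=
  stmt_3_general n m A L hLyap hL
end

section
/- Work over a commutative ring R with subsystem blocks G_wv, G_wd, G_wu, G_zv, G_zd, G_zu, G_yv, G_yd, G_yu of compatible sizes. Let Q and Q̄ be matrices over R with det(1 + Q·G_yu) and det(1 + Q̄·G_wv) units, and define the controller K := (1 + Q·G_yu)⁻¹·Q and the environment Ḡ := (1 + Q̄·G_wv)⁻¹·Q̄. Assume the retrofit constraint G_wu · Q · G_yv = 0. Then for all column vectors u, y, v, w, δ_u, δ_y, δ_v, δ_w over R satisfying the loop equations u = δ_u + K·y, y = δ_y + G_yu·u + G_yv·v, v = δ_v + Ḡ·w, and w = δ_w + G_wv·v + G_wu·u, it holds that u = (1 + Q·G_yu)·δ_u + Q·δ_y + Q·G_yv·v and v = Q̄·G_wu·(1 + Q·G_yu)·δ_u + Q̄·G_wu·Q·δ_y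 + (1 + Q̄·G_wv)·δ_v + Q̄·δ_w. -/
open Matrix

/-- Sufficiency part of Theorem 1 (Appendix B): under the retrofit constraint
`G_wu Q G_yv = 0`, the closed-loop signals of the perturbed loop are given by explicit
formulas polynomial in the Youla parameters `Q` and `Q̄`. -/
theorem stmt_6 (R : Type*) [CommRing R] (nv nd nu nw nz ny : ℕ)
    (Gwv : Matrix (Fin nw) (Fin nv) R) (Gwd : Matrix (Fin nw) (Fin nd) R)
    (Gwu : Matrix (Fin nw) (Fin nu) R)
    (Gzv : Matrix (Fin nz) (Fin nv) R) (Gzd : Matrix (Fin nz) (Fin nd) R)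
    (Gzu : Matrix (Fin nz) (Fin nu) R)
    (Gyv : Matrix (Fin ny) (Fin nv) R) (Gyd : Matrix (Fin ny) (Fin nd) R)
    (Gyu : Matrix (Fin ny) (Fin nu) R)
    (Q : Matrix (Fin nu) (Fin ny) R) (Qbar : Matrix (Fin nv) (Fin nw) R)
    (hQ : IsUnit (1 + Q * Gyu).det) (hQbar : IsUnit (1 + Qbar * Gwv).det)
    (K : Matrix (Fin nu) (Fin ny) R) (hK : K = (1 + Q * Gyu)⁻¹ * Q)
    (Gbar : Matrix (Fin nv) (Fin nw) R) (hGbar : Gbar = (1 + Qbar * Gwv)⁻¹ * Qbar)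
    (hretro : Gwu * Q * Gyv = 0)
    (u δu : Matrix (Fin nu) (Fin 1) R) (y δy : Matrix (Fin ny) (Fin 1) R)
    (v δv : Matrix (Fin nv) (Fin 1) R) (w δw : Matrix (Fin nw) (Fin 1) R)
    (hu : u = δu + K * y)
    (hy : y = δy + Gyu * u + Gyv * v)
    (hv : v = δv + Gbar * w)
    (hw : w = δw + Gwv * v + Gwu * u) :
    u = (1 + Q * Gyu) * δu + Q * δy + Q * Gyv * v ∧
      v = Qbar * Gwu * (1 + Q * Gyu) * δu + Qbar * Gwu * Q * δy
            + (1 + Qbar * Gwv) * δv + Qbar * δw := by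

  have hAK : (1 + Q * Gyu) * K = Q := by
    rw [hK, ← Matrix.mul_assoc, Matrix.mul_nonsing_inv _ hQ, Matrix.one_mul]
  have hBG : (1 + Qbar * Gwv) * Gbar = Qbar := by
    rw [hGbar, ← Matrix.mul_assoc, Matrix.mul_nonsing_inv _ hQbar, Matrix.one_mul]
  have h1 : (1 + Q * Gyu) * u = (1 + Q * Gyu) * δu + Q * y := by
    calc (1 + Q * Gyu) * u = (1 + Q * Gyu) * δu + (1 + Q * Gyu) * (K * y) := by
          rw [hu, Matrix.mul_add]
      _ = (1 + Q * Gyu) * δu + Q * y := by rw [← Matrix.mul_assoc, hAK]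
  have hufin : u = (1 + Q * Gyu) * δu + Q * δy + Q * Gyv * v := by
    have h2 : u + Q * Gyu * u
        = ((1 + Q * Gyu) * δu + Q * δy + Q * Gyv * v) + Q * Gyu * u := by
      have := h1
      rw [hy] at this
      simp only [Matrix.add_mul, Matrix.one_mul, Matrix.mul_add, Matrix.mul_assoc] at this ⊢
      rw [this]; abel
    exact add_right_cancel h2
  refine ⟨hufin, ?_⟩
  have h3 : (1 + Qbar * Gwv) * v = (1 + Qbar * Gwv) * δv + Qbar * w := by
    calc (1 + Qbar * Gwv) * v = (1 + Qbar * Gwv) * δv + (1 + Qbar * Gwv) * (Gbar * w) := by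
          rw [hv, Matrix.mul_add]
      _ = _ := by rw [← Matrix.mul_assoc, hBG]
  have hzero : Qbar * Gwu * (Q * Gyv * v) = 0 := by
    calc Qbar * Gwu * (Q * Gyv * v) = Qbar * (Gwu * Q * Gyv) * v := by
          simp only [Matrix.mul_assoc]
      _ = 0 := by rw [hretro, Matrix.mul_zero, Matrix.zero_mul]
  have h4 : v + Qbar * Gwv * v
      = (Qbar * Gwu * (1 + Q * Gyu) * δu + Qbar * Gwu * Q * δy
          + (1 + Qbar * Gwv) * δv + Qbar * δw) + Qbar * Gwv * v := by
    have := h3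
    rw [hw, hufin] at this
    simp only [Matrix.add_mul, Matrix.one_mul, Matrix.mul_add, Matrix.mul_assoc] at this ⊢
    simp only [Matrix.mul_assoc] at hzero
    rw [this, hzero]; abel
  exact add_right_cancel h4
end

section
/- Work over a commutative ring R with subsystem blocks G_wv, G_wu, G_yv, G_yu. Let K be a matrix over R with det(1 − G_yu·K) a unit, and define the Youla parameter Q := K·(1 − G_yu·K)⁻¹. Then for all column vectors v, u, y, w over R satisfying y = G_yv·v + G_yu·u, u = K·y, and w = G_wv·v + G_wu·u, it holds that w = (G_wv + G_wu·Q·G_yv)·v. In particular, if G_wu·Q·G_yv = 0 then w = G_wv·v, i.e., the closed-loop interaction map from v to w coincides with that of the uncontrolled subsystem. -/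
open Matrix

/-- The retrofit constraint keeps the interaction map invariant: with Youla parameter
`Q = K (1 - G_yu K)⁻¹`, the closed-loop map from `v` to `w` is `G_wv + G_wu Q G_yv`;
in particular it equals `G_wv` whenever `G_wu Q G_yv = 0`. -/
theorem stmt_7 (R : Type*) [CommRing R] (nv nu nw ny : ℕ)
    (Gwv : Matrix (Fin nw) (Fin nv) R) (Gwu : Matrix (Fin nw) (Fin nu) R)
    (Gyv : Matrix (Fin ny) (Fin nv) R) (Gyu : Matrix (Fin ny) (Fin nu) R)
    (K : Matrix (Fin nu) (Fin ny) R)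
    (hK : IsUnit (1 - Gyu * K).det)
    (Q : Matrix (Fin nu) (Fin ny) R) (hQ : Q = K * (1 - Gyu * K)⁻¹)
    (v : Matrix (Fin nv) (Fin 1) R) (u : Matrix (Fin nu) (Fin 1) R)
    (y : Matrix (Fin ny) (Fin 1) R) (w : Matrix (Fin nw) (Fin 1) R)
    (hy : y = Gyv * v + Gyu * u)
    (hu : u = K * y)
    (hw : w = Gwv * v + Gwu * u) :
    w = (Gwv + Gwu * Q * Gyv) * v ∧ (Gwu * Q * Gyv = 0 → w = Gwv * v) := by
  have h1 : (1 - Gyu * K) * y = Gyv * v := by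
    have : y = Gyv * v + Gyu * (K * y) := by rw [← hu]; exact hy
    rw [Matrix.sub_mul, Matrix.one_mul, Matrix.mul_assoc]
    nth_rewrite 1 [this]
    abel
  have hyv : y = (1 - Gyu * K)⁻¹ * (Gyv * v) := by
    rw [← h1, ← Matrix.mul_assoc, Matrix.nonsing_inv_mul _ hK, Matrix.one_mul]
  have huv : u = Q * Gyv * v := by
    rw [hu, hyv, hQ]
    simp [Matrix.mul_assoc]
  have hmain : w = (Gwv + Gwu * Q * Gyv) * v := by
    rw [hw, huv]
    simp [Matrix.add_mul, Matrix.mul_assoc]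
  exact ⟨hmain, fun h0 => by rw [hmain, Matrix.add_mul, h0, Matrix.zero_mul, add_zero]⟩
end

section
/- Work over a commutative ring R with subsystem blocks G_wv, G_wd, G_wu, G_zv, G_zd, G_zu, G_yv, G_yd, G_yu. Let Q and Q̄ be matrices over R with det(1 + Q·G_yu) and det(1 + Q̄·G_wv) units, and define K := (1 + Q·G_yu)⁻¹·Q and Ḡ := (1 + Q̄·G_wv)⁻¹·Q̄. Assume additionally that det(1 − Q̄·G_wu·Q·G_yv) is a unit. Then for all column vectors d, v, w, u, y, z over R satisfying w = G_wv·v + G_wd·d + G_wu·u, z = G_zv·v + G_zd·d + G_zu·u, y = G_yv·v + G_yd·d + G_yu·u, v = Ḡ·w, and u = K·y, it holds that z = ( M_zd(Q) + M_zv(Q)·(1 − Q̄·G_wu·Q·G_yv)⁻¹·Q̄·M_wd(Q) )·d, where M_zd(Q) = G_zd + G_zu·Q·G_yd, M_zv(Q) = G_zv + G_zu·Q·G_yv, and M_wd(Q) = G_wd + G_wu·Q·G_yd. -/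
open Matrix

/-- General closed-loop formula (displayed before Theorem 2 of the paper): the map from `d`
to `z` equals `M_zd(Q) + M_zv(Q) (1 - Q̄ G_wu Q G_yv)⁻¹ Q̄ M_wd(Q)`. -/
theorem stmt_8 (R : Type*) [CommRing R] (nv nd nu nw nz ny : ℕ)
    (Gwv : Matrix (Fin nw) (Fin nv) R) (Gwd : Matrix (Fin nw) (Fin nd) R)
    (Gwu : Matrix (Fin nw) (Fin nu) R)
    (Gzv : Matrix (Fin nz) (Fin nv) R) (Gzd : Matrix (Fin nz) (Fin nd) R)
    (Gzu : Matrix (Fin nz) (Fin nu) R)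
    (Gyv : Matrix (Fin ny) (Fin nv) R) (Gyd : Matrix (Fin ny) (Fin nd) R)
    (Gyu : Matrix (Fin ny) (Fin nu) R)
    (Q : Matrix (Fin nu) (Fin ny) R) (Qbar : Matrix (Fin nv) (Fin nw) R)
    (hQ : IsUnit (1 + Q * Gyu).det) (hQbar : IsUnit (1 + Qbar * Gwv).det)
    (K : Matrix (Fin nu) (Fin ny) R) (hK : K = (1 + Q * Gyu)⁻¹ * Q)
    (Gbar : Matrix (Fin nv) (Fin nw) R) (hGbar : Gbar = (1 + Qbar * Gwv)⁻¹ * Qbar)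
    (hloop : IsUnit (1 - Qbar * Gwu * Q * Gyv).det)
    (d : Matrix (Fin nd) (Fin 1) R) (v : Matrix (Fin nv) (Fin 1) R)
    (w : Matrix (Fin nw) (Fin 1) R) (u : Matrix (Fin nu) (Fin 1) R)
    (y : Matrix (Fin ny) (Fin 1) R) (z : Matrix (Fin nz) (Fin 1) R)
    (hw : w = Gwv * v + Gwd * d + Gwu * u)
    (hz : z = Gzv * v + Gzd * d + Gzu * u)
    (hy : y = Gyv * v + Gyd * d + Gyu * u)
    (hv : v = Gbar * w)
    (hu : u = K * y) :
    z = ((Gzd + Gzu * Q * Gyd)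
          + (Gzv + Gzu * Q * Gyv) * (1 - Qbar * Gwu * Q * Gyv)⁻¹ * Qbar
              * (Gwd + Gwu * Q * Gyd)) * d := by

  -- Step 1: u = Q Gyv v + Q Gyd d
  have hu2 : u = Q * (Gyv * v) + Q * (Gyd * d) := by
    have h1 : (1 + Q * Gyu) * u = Q * y := by
      rw [hu, hK, ← Matrix.mul_assoc, ← Matrix.mul_assoc,
        Matrix.mul_nonsing_inv _ hQ, Matrix.one_mul]
    rw [hy] at h1
    have h2 : u + Q * (Gyu * u) = Q * (Gyv * v) + Q * (Gyd * d) + Q * (Gyu * u) := by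
      simpa [Matrix.add_mul, Matrix.mul_add, Matrix.one_mul, Matrix.mul_assoc] using h1
    exact add_right_cancel h2
  -- Step 2: v = Qbar Gwd d + Qbar Gwu u
  have hv2 : v = Qbar * (Gwd * d) + Qbar * (Gwu * u) := by
    have h1 : (1 + Qbar * Gwv) * v = Qbar * w := by
      rw [hv, hGbar, ← Matrix.mul_assoc, ← Matrix.mul_assoc,
        Matrix.mul_nonsing_inv _ hQbar, Matrix.one_mul]
    rw [hw] at h1
    have h2 : v + Qbar * (Gwv * v)
        = Qbar * (Gwv * v) + Qbar * (Gwd * d) + Qbar * (Gwu * u) := by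
      simpa [Matrix.add_mul, Matrix.mul_add, Matrix.one_mul, Matrix.mul_assoc] using h1
    apply add_right_cancel (b := Qbar * (Gwv * v))
    rw [h2]; abel
  -- Step 3: closed loop for v
  have hv4 : v = Qbar * (Gwd * d) + Qbar * (Gwu * (Q * (Gyv * v)))
      + Qbar * (Gwu * (Q * (Gyd * d))) := by
    nth_rewrite 1 [hv2]
    rw [hu2]
    simp only [Matrix.mul_add]
    abel
  have hv5 : (1 - Qbar * Gwu * Q * Gyv) * v
      = Qbar * (Gwd * d) + Qbar * (Gwu * (Q * (Gyd * d))) := by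
    rw [Matrix.sub_mul, Matrix.one_mul, Matrix.mul_assoc, Matrix.mul_assoc, Matrix.mul_assoc]
    nth_rewrite 1 [hv4]
    abel
  have hvfin : v = (1 - Qbar * Gwu * Q * Gyv)⁻¹
      * (Qbar * (Gwd * d) + Qbar * (Gwu * (Q * (Gyd * d)))) := by
    rw [← hv5, ← Matrix.mul_assoc, Matrix.nonsing_inv_mul _ hloop, Matrix.one_mul]
  rw [hz, hu2]
  rw [hvfin]
  simp only [Matrix.mul_add, Matrix.add_mul, Matrix.mul_assoc]
  abel
end

section
/- Work over a commutative ring R with subsystem blocks G_wv, G_wd, G_wu, G_zv, G_zd, G_zu, G_yv, G_yd, G_yu. Let Q and Q̄ be matrices over R with det(1 + Q·G_yu) and det(1 + Q̄·G_wv) units, and define K := (1 + Q·G_yu)⁻¹·Q and Ḡ := (1 + Q̄·G_wv)⁻¹·Q̄. Assume the retrofit constraint G_wu·Q·G_yv = 0. Then for all column vectors d, v, w, u, y, z over R satisfying w = G_wv·v + G_wd·d + G_wu·u, z = G_zv·v + G_zd·d + G_zu·u, y = G_yv·v + G_yd·d + G_yu·u, v = Ḡ·w, and u = K·y, it holds that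 z = ( M_zd(Q) + M_zv(Q)·Q̄·M_wd(Q) )·d, where M_zd(Q) = G_zd + G_zu·Q·G_yd, M_zv(Q) = G_zv + G_zu·Q·G_yv, and M_wd(Q) = G_wd + G_wu·Q·G_yd. In particular the closed-loop map from d to z is affine in the environment's Youla parameter Q̄. -/
open Matrix

/-- Theorem 2 of the paper: under the retrofit constraint `G_wu Q G_yv = 0`, the closed-loop
map from `d` to `z` equals `M_zd(Q) + M_zv(Q) Q̄ M_wd(Q)`, which is affine in the environment's
Youla parameter `Q̄`. -/
theorem stmt_9 (R : Type*) [CommRing R] (nv nd nu nw nz ny : ℕ)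
    (Gwv : Matrix (Fin nw) (Fin nv) R) (Gwd : Matrix (Fin nw) (Fin nd) R)
    (Gwu : Matrix (Fin nw) (Fin nu) R)
    (Gzv : Matrix (Fin nz) (Fin nv) R) (Gzd : Matrix (Fin nz) (Fin nd) R)
    (Gzu : Matrix (Fin nz) (Fin nu) R)
    (Gyv : Matrix (Fin ny) (Fin nv) R) (Gyd : Matrix (Fin ny) (Fin nd) R)
    (Gyu : Matrix (Fin ny) (Fin nu) R)
    (Q : Matrix (Fin nu) (Fin ny) R) (Qbar : Matrix (Fin nv) (Fin nw) R)
    (hQ : IsUnit (1 + Q * Gyu).det) (hQbar : IsUnit (1 + Qbar * Gwv).det)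
    (K : Matrix (Fin nu) (Fin ny) R) (hK : K = (1 + Q * Gyu)⁻¹ * Q)
    (Gbar : Matrix (Fin nv) (Fin nw) R) (hGbar : Gbar = (1 + Qbar * Gwv)⁻¹ * Qbar)
    (hretro : Gwu * Q * Gyv = 0)
    (d : Matrix (Fin nd) (Fin 1) R) (v : Matrix (Fin nv) (Fin 1) R)
    (w : Matrix (Fin nw) (Fin 1) R) (u : Matrix (Fin nu) (Fin 1) R)
    (y : Matrix (Fin ny) (Fin 1) R) (z : Matrix (Fin nz) (Fin 1) R)
    (hw : w = Gwv * v + Gwd * d + Gwu * u)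
    (hz : z = Gzv * v + Gzd * d + Gzu * u)
    (hy : y = Gyv * v + Gyd * d + Gyu * u)
    (hv : v = Gbar * w)
    (hu : u = K * y) :
    z = ((Gzd + Gzu * Q * Gyd)
          + (Gzv + Gzu * Q * Gyv) * Qbar * (Gwd + Gwu * Q * Gyd)) * d := by
  -- Step 1: u = Q Gyv v + Q Gyd d
  have h1 : (1 + Q * Gyu) * u = Q * y := by
    rw [hu, hK, Matrix.mul_assoc, Matrix.mul_nonsing_inv_cancel_left _ _ hQ]
  have hu' : u = Q * Gyv * v + Q * Gyd * d := by
    have := h1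
    rw [hy] at this
    have h2 : u + Q * Gyu * u = Q * Gyv * v + Q * Gyd * d + Q * Gyu * u := by
      calc u + Q * Gyu * u = (1 + Q * Gyu) * u := by simp only [Matrix.add_mul, Matrix.mul_add, Matrix.one_mul, Matrix.mul_assoc]; try abel
        _ = Q * (Gyv * v + Gyd * d + Gyu * u) := this
        _ = Q * Gyv * v + Q * Gyd * d + Q * Gyu * u := by simp only [Matrix.add_mul, Matrix.mul_add, Matrix.one_mul, Matrix.mul_assoc]; try abel
    exact add_right_cancel h2
  -- Step 2: v = Qbar (Gwd d + Gwu u)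
  have h3 : (1 + Qbar * Gwv) * v = Qbar * w := by
    rw [hv, hGbar, Matrix.mul_assoc, Matrix.mul_nonsing_inv_cancel_left _ _ hQbar]
  have hv' : v = Qbar * Gwd * d + Qbar * Gwu * u := by
    have := h3
    rw [hw] at this
    have h4 : v + Qbar * Gwv * v
        = Qbar * Gwd * d + Qbar * Gwu * u + Qbar * Gwv * v := by
      calc v + Qbar * Gwv * v = (1 + Qbar * Gwv) * v := by simp only [Matrix.add_mul, Matrix.mul_add, Matrix.one_mul, Matrix.mul_assoc]; try abel
        _ = Qbar * (Gwv * v + Gwd * d + Gwu * u) := this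
        _ = Qbar * Gwd * d + Qbar * Gwu * u + Qbar * Gwv * v := by simp only [Matrix.add_mul, Matrix.mul_add, Matrix.one_mul, Matrix.mul_assoc]; try abel
    exact add_right_cancel h4
  -- Step 3: Gwu u simplifies by retrofit
  have hGwuu : Gwu * u = Gwu * Q * Gyd * d := by
    rw [hu']
    rw [Matrix.mul_add, ← Matrix.mul_assoc, ← Matrix.mul_assoc, hretro,
      Matrix.zero_mul, zero_add]; simp only [Matrix.mul_assoc]
  have hv'' : v = Qbar * (Gwd + Gwu * Q * Gyd) * d := by
    rw [hv', Matrix.mul_assoc Qbar Gwu u, hGwuu]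
    simp only [Matrix.add_mul, Matrix.mul_add, Matrix.one_mul, Matrix.mul_assoc]; try abel
  rw [hz, hu', hv'']
  simp only [Matrix.add_mul, Matrix.mul_add, Matrix.one_mul, Matrix.mul_assoc]; try abel
end

section
/- Let R be a commutative ring, G_yu a p×m matrix and G_yv a p×k matrix over R. Define the stacked matrices G_{(y,v)u} := fromRows(G_yu, 0) (a (p+k)×m matrix), G_{(y,v)v} := fromRows(G_yv, I_k) (a (p+k)×k matrix), and the output rectifier R₀ := fromColumns(I_p, −G_yv) (a p×(p+k) matrix). For an m×(p+k) matrix K over R, the following are equivalent: (i) there exists an m×(p+k) matrix Q over R with det(1 + Q·G_{(y,v)u}) a unit, K = (1 + Q·G_{(y,v)u})⁻¹·Q, and Q·G_{(y,v)v} = 0; (ii) there exists an m×p matrix Q̂ over R with det(1 + Q̂·G_yu) a unit and K = ((1 + Q̂·G_yu)⁻¹·Q̂)·R₀. -/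
open Matrix

/-!
Splitting `Q = [Q₁ Q₂]` along `y ⊕ v`, the loop `Q G_{(y,v)u}` only sees `Q₁ G_yu`, and the
constraint `Q G_{(y,v)v} = Q₁ G_yv + Q₂ = 0` says exactly that `Q = Q₁ R₀`. Hence
`Q ↦ Q₁` and `Q̂ ↦ Q̂ R₀` match the two parameterizations, and `(1 + Q̂ G_yu)⁻¹ Q̂ R₀` is `K`.
-/

namespace Matrix

variable {R : Type*} [CommRing R] {l m n o : Type*} [Fintype n] [Fintype o]

theorem mul_fromRows_zero (Q : Matrix l (n ⊕ o) R) (G : Matrix n m R) :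
    Q * fromRows G (0 : Matrix o m R) = Q.toCols₁ * G := by
  rw [← fromCols_toCols Q, fromCols_mul_fromRows, Matrix.mul_zero, add_zero, toCols₁_fromCols]

variable [DecidableEq n]

theorem fromCols_one_neg_mul_fromRows_zero (A : Matrix n o R) (G : Matrix n m R) :
    fromCols (1 : Matrix n n R) (-A) * fromRows G (0 : Matrix o m R) = G := by
  rw [fromCols_mul_fromRows, Matrix.mul_zero, add_zero, Matrix.one_mul]

variable [DecidableEq o]

theorem fromCols_one_neg_mul_fromRows_one (A : Matrix n o R) :
    fromCols (1 : Matrix n n R) (-A) * fromRows A (1 : Matrix o o R) = 0 := by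
  rw [fromCols_mul_fromRows, Matrix.one_mul, Matrix.mul_one, add_neg_cancel]

theorem eq_toCols₁_mul_fromCols_one_neg {Q : Matrix l (n ⊕ o) R} {A : Matrix n o R}
    (hQ : Q * fromRows A (1 : Matrix o o R) = 0) :
    Q = Q.toCols₁ * fromCols (1 : Matrix n n R) (-A) := by
  have hQ₂ : Q.toCols₂ = -(Q.toCols₁ * A) := by
    rw [← fromCols_toCols Q, fromCols_mul_fromRows, Matrix.mul_one] at hQ
    exact eq_neg_of_add_eq_zero_right hQ
  rw [mul_fromCols, Matrix.mul_one, Matrix.mul_neg, ← hQ₂, fromCols_toCols]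

end Matrix

/-- Proposition 1 of the paper: `K` is an output-rectifying retrofit controller (a Youla
controller for the augmented plant whose parameter annihilates `G_{(y,v)v}`) iff
`K = K̂ R₀` where `K̂` is a Youla-parameterized controller for `G_yu` and
`R₀ = fromColumns(I, -G_yv)` is the output rectifier. -/
theorem stmt_11 (R : Type*) [CommRing R] (p m k : ℕ)
    (Gyu : Matrix (Fin p) (Fin m) R) (Gyv : Matrix (Fin p) (Fin k) R)
    (K : Matrix (Fin m) (Fin p ⊕ Fin k) R) :
    (∃ Q : Matrix (Fin m) (Fin p ⊕ Fin k) R,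
        IsUnit (1 + Q * Matrix.fromRows Gyu (0 : Matrix (Fin k) (Fin m) R)).det ∧
        K = (1 + Q * Matrix.fromRows Gyu (0 : Matrix (Fin k) (Fin m) R))⁻¹ * Q ∧
        Q * Matrix.fromRows Gyv (1 : Matrix (Fin k) (Fin k) R) = 0) ↔
      (∃ Qhat : Matrix (Fin m) (Fin p) R,
        IsUnit (1 + Qhat * Gyu).det ∧
        K = ((1 + Qhat * Gyu)⁻¹ * Qhat)
              * Matrix.fromCols (1 : Matrix (Fin p) (Fin p) R) (-Gyv)) := by
  constructor
  · rintro ⟨Q, hunit, rfl, hQ⟩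
    rw [mul_fromRows_zero] at hunit ⊢
    exact ⟨Q.toCols₁, hunit, by rw [Matrix.mul_assoc, ← eq_toCols₁_mul_fromCols_one_neg hQ]⟩
  · rintro ⟨Qhat, hunit, rfl⟩
    have hloop : Qhat * fromCols (1 : Matrix (Fin p) (Fin p) R) (-Gyv) *
        fromRows Gyu (0 : Matrix (Fin k) (Fin m) R) = Qhat * Gyu := by
      rw [Matrix.mul_assoc, fromCols_one_neg_mul_fromRows_zero]
    refine ⟨Qhat * fromCols 1 (-Gyv), by rwa [hloop], by rw [hloop, Matrix.mul_assoc], ?_⟩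
    rw [Matrix.mul_assoc, fromCols_one_neg_mul_fromRows_one, Matrix.mul_zero]
end

section
/- Work over a commutative ring R with subsystem blocks G_wv, G_wd, G_wu, G_zv, G_zd, G_zu, G_yv, G_yd, G_yu. Let K̂ be a matrix over R with det(1 − G_yu·K̂) a unit, and let Ḡ be any matrix over R with det(1 − Ḡ·G_wv) a unit. Then for all column vectors d, v, w, u, y, z over R satisfying w = G_wv·v + G_wd·d + G_wu·u, z = G_zv·v + G_zd·d + G_zu·u, y = G_yv·v + G_yd·d + G_yu·u, v = Ḡ·w, and the output-rectifying control law u = K̂·(y − G_yv·v), it holds that z = M̂_zd(K̂)·d + G_zv·(1 − Ḡ·G_wv)⁻¹·Ḡ·M̂_wd(K̂)·d, where M̂_zd(K̂) = G_zd + G_zu·K̂·(1 − G_yu·K̂)⁻¹·G_yd and M̂_wd(K̂) = G_wd + G_wu·K̂·(1 − G_yu·K̂)⁻¹·G_yd. -/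
open Matrix

/-- Proposition 2 of the paper: with an output-rectifying retrofit controller
`u = K̂ (y - G_yv v)`, the closed loop has the cascade structure
`z = M̂_zd(K̂) d + G_zv (1 - Ḡ G_wv)⁻¹ Ḡ M̂_wd(K̂) d`. -/
theorem stmt_12 (R : Type*) [CommRing R] (nv nd nu nw nz ny : ℕ)
    (Gwv : Matrix (Fin nw) (Fin nv) R) (Gwd : Matrix (Fin nw) (Fin nd) R)
    (Gwu : Matrix (Fin nw) (Fin nu) R)
    (Gzv : Matrix (Fin nz) (Fin nv) R) (Gzd : Matrix (Fin nz) (Fin nd) R)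
    (Gzu : Matrix (Fin nz) (Fin nu) R)
    (Gyv : Matrix (Fin ny) (Fin nv) R) (Gyd : Matrix (Fin ny) (Fin nd) R)
    (Gyu : Matrix (Fin ny) (Fin nu) R)
    (Khat : Matrix (Fin nu) (Fin ny) R) (hKhat : IsUnit (1 - Gyu * Khat).det)
    (Gbar : Matrix (Fin nv) (Fin nw) R) (hGbar : IsUnit (1 - Gbar * Gwv).det)
    (d : Matrix (Fin nd) (Fin 1) R) (v : Matrix (Fin nv) (Fin 1) R)
    (w : Matrix (Fin nw) (Fin 1) R) (u : Matrix (Fin nu) (Fin 1) R)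
    (y : Matrix (Fin ny) (Fin 1) R) (z : Matrix (Fin nz) (Fin 1) R)
    (hw : w = Gwv * v + Gwd * d + Gwu * u)
    (hz : z = Gzv * v + Gzd * d + Gzu * u)
    (hy : y = Gyv * v + Gyd * d + Gyu * u)
    (hv : v = Gbar * w)
    (hu : u = Khat * (y - Gyv * v)) :
    z = (Gzd + Gzu * Khat * (1 - Gyu * Khat)⁻¹ * Gyd) * d
          + Gzv * (1 - Gbar * Gwv)⁻¹ * Gbar
              * (Gwd + Gwu * Khat * (1 - Gyu * Khat)⁻¹ * Gyd) * d := by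
  have h1 : IsUnit (1 - Khat * Gyu).det := by
    have e1 : (1 - Khat * Gyu) = 1 + Khat * (-Gyu) := by
      simp [mul_neg, sub_eq_add_neg]
    have e2 : (1 + (-Gyu) * Khat) = 1 - Gyu * Khat := by
      simp [neg_mul, sub_eq_add_neg]
    rw [e1, Matrix.det_one_add_mul_comm, e2]; exact hKhat
  have key : (1 - Khat * Gyu) * (Khat * (1 - Gyu * Khat)⁻¹) = Khat := by
    have hc : (1 - Khat * Gyu) * Khat = Khat * (1 - Gyu * Khat) := by
      simp [Matrix.sub_mul, Matrix.mul_sub, Matrix.mul_assoc]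
    rw [← Matrix.mul_assoc, hc, Matrix.mul_assoc, Matrix.mul_nonsing_inv _ hKhat,
      Matrix.mul_one]
  have hpush : (1 - Khat * Gyu)⁻¹ * Khat = Khat * (1 - Gyu * Khat)⁻¹ := by
    have h2 := congrArg (fun M => (1 - Khat * Gyu)⁻¹ * M) key
    simpa [← Matrix.mul_assoc, Matrix.nonsing_inv_mul _ h1] using h2.symm
  have hu2 : u = Khat * Gyd * d + Khat * Gyu * u := by
    conv_lhs => rw [hu, hy]
    simp [Matrix.mul_sub, Matrix.mul_add, Matrix.mul_assoc]
    abel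
  have h2 : (1 - Khat * Gyu) * u = Khat * Gyd * d := by
    rw [Matrix.sub_mul, Matrix.one_mul]
    exact sub_eq_of_eq_add hu2
  have hu' : u = (1 - Khat * Gyu)⁻¹ * (Khat * Gyd * d) := by
    rw [← h2, ← Matrix.mul_assoc, Matrix.nonsing_inv_mul _ h1, Matrix.one_mul]
  have hu3 : u = Khat * (1 - Gyu * Khat)⁻¹ * Gyd * d := by
    rw [hu', show (1 - Khat * Gyu)⁻¹ * (Khat * Gyd * d)
        = ((1 - Khat * Gyu)⁻¹ * Khat) * Gyd * d by simp [Matrix.mul_assoc], hpush]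
  have hv2 : v = Gbar * Gwv * v + Gbar * (Gwd * d + Gwu * u) := by
    conv_lhs => rw [hv, hw]
    simp [Matrix.mul_add, Matrix.mul_assoc]
    abel
  have h3 : (1 - Gbar * Gwv) * v = Gbar * (Gwd * d + Gwu * u) := by
    rw [Matrix.sub_mul, Matrix.one_mul]
    exact sub_eq_of_eq_add' hv2
  have hv' : v = (1 - Gbar * Gwv)⁻¹ * (Gbar * (Gwd * d + Gwu * u)) := by
    rw [← h3, ← Matrix.mul_assoc, Matrix.nonsing_inv_mul _ hGbar, Matrix.one_mul]
  rw [hz, hv', hu3]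
  simp [Matrix.mul_add, Matrix.add_mul, Matrix.mul_assoc]
  abel
end

section
/- Let ι be a finite index type and R a commutative ring. For each i ∈ ι let G i be a (p i)×(m i) matrix over R and K i an (m i)×(p i) matrix over R such that det(1 − G i · K i) is a unit of R. Let 𝐆 := blockDiagonal' G and 𝐊 := blockDiagonal' K be the block-diagonal matrices (Matrix.blockDiagonal', indexed by the corresponding sigma types). Then det(1 − 𝐆·𝐊) is a unit, and 𝐊·(1 − 𝐆·𝐊)⁻¹ = blockDiagonal' (fun i => K i · (1 − G i · K i)⁻¹). -/
open Matrix

/-- The Youla parameter of a block-diagonal controller for a block-diagonal plant is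
block-diagonal, with blocks the Youla parameters of the individual subcontrollers. -/
theorem stmt_13 (ι : Type*) [Fintype ι] [DecidableEq ι] (R : Type*) [CommRing R]
    (p m : ι → ℕ)
    (G : ∀ i, Matrix (Fin (p i)) (Fin (m i)) R)
    (K : ∀ i, Matrix (Fin (m i)) (Fin (p i)) R)
    (h : ∀ i, IsUnit (1 - G i * K i).det) :
    IsUnit (1 - Matrix.blockDiagonal' G * Matrix.blockDiagonal' K).det ∧
      Matrix.blockDiagonal' K
          * (1 - Matrix.blockDiagonal' G * Matrix.blockDiagonal' K)⁻¹ =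
        Matrix.blockDiagonal' (fun i => K i * (1 - G i * K i)⁻¹) := by
  set N : ∀ i, Matrix (Fin (p i)) (Fin (p i)) R := fun i => 1 - G i * K i with hNdef
  have hN : 1 - Matrix.blockDiagonal' G * Matrix.blockDiagonal' K
      = Matrix.blockDiagonal' N := by
    rw [← blockDiagonal'_mul, ← blockDiagonal'_one, ← blockDiagonal'_sub]; rfl
  have hleft : Matrix.blockDiagonal' (fun i => (N i)⁻¹) * Matrix.blockDiagonal' N = 1 := by
    rw [← blockDiagonal'_mul]
    have : (fun i => (N i)⁻¹ * N i) = fun _ => 1 := by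
      funext i; exact nonsing_inv_mul _ (h i)
    rw [this]; exact blockDiagonal'_one
  have hUnit : IsUnit (Matrix.blockDiagonal' N).det :=
    Matrix.isUnit_det_of_left_inverse hleft
  have hinv : (Matrix.blockDiagonal' N)⁻¹ = Matrix.blockDiagonal' (fun i => (N i)⁻¹) :=
    inv_eq_left_inv hleft
  refine ⟨hN ▸ hUnit, ?_⟩
  rw [hN, hinv, ← blockDiagonal'_mul]
end

section
/- Let ι be a finite index type and R a commutative ring. For each i ∈ ι let G^i_wv, G^i_wd, G^i_wu, G^i_zv, G^i_zd, G^i_zu, G^i_yv, G^i_yd, G^i_yu be subsystem blocks over R, and let K̂ i be a matrix over R with det(1 − G^i_yu·K̂ i) a unit. Let 𝐋 be a matrix over R mapping the stacked interaction-output index to the stacked interaction-input index, with det(1 − 𝐋·blockDiagonal'(fun i => G^i_wv)) a unit. Suppose column vectors d_i, v_i, w_i, u_i, y_i, z_i over R satisfy, for every i, the equations w_i = G^i_wv·v_i + G^i_wd·d_i + G^i_wu·u_i, z_i = G^i_zv·v_i + G^i_zd·d_i + G^i_zu·u_i, y_i = G^i_yv·v_i + G^i_yd·d_i + G^i_yu·u_i,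 and u_i = K̂ i·(y_i − G^i_yv·v_i), and suppose the stacked vectors satisfy 𝐯 = 𝐋·𝐰. Then the stacked evaluation output satisfies 𝐳 = blockDiagonal'(fun i => M̂^i_zd)·𝐝 + blockDiagonal'(fun i => G^i_zv)·(1 − 𝐋·blockDiagonal'(fun i => G^i_wv))⁻¹·𝐋·blockDiagonal'(fun i => M̂^i_wd)·𝐝, where M̂^i_zd = G^i_zd + G^i_zu·K̂ i·(1 − G^i_yu·K̂ i)⁻¹·G^i_yd and M̂^i_wd = G^i_wd + G^i_wu·K̂ i·(1 − G^i_yu·K̂ i)⁻¹·G^i_yd. -/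
open Matrix

/-- Stacking a family of column vectors indexed by a sigma type. -/
def stackVec {ι : Type*} {κ : ι → Type*} {R : Type*}
    (f : ∀ i, Matrix (κ i) (Fin 1) R) : Matrix (Σ i, κ i) (Fin 1) R :=
  Matrix.of fun q o => f q.1 q.2 o


lemma bd_mul_stack {ι : Type*} [Fintype ι] [DecidableEq ι] {κ κ' : ι → Type*}
    [∀ i, Fintype (κ i)] {R : Type*} [CommRing R]
    (M : ∀ i, Matrix (κ' i) (κ i) R) (f : ∀ i, Matrix (κ i) (Fin 1) R) :
    Matrix.blockDiagonal' M * stackVec f = stackVec (fun i => M i * f i) := by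
  ext ⟨k, i⟩ o
  simp only [stackVec, Matrix.mul_apply, Matrix.of_apply, ← Finset.univ_sigma_univ,
    Finset.sum_sigma]
  rw [Fintype.sum_eq_single k]
  · simp [Matrix.mul_apply]
  · intro j' hj'
    exact Finset.sum_eq_zero fun _ _ => by
      rw [Matrix.blockDiagonal'_apply_ne _ _ _ hj'.symm, zero_mul]

/-- Solve the fixed-point equation `u = K*(g + G*u)`. -/
lemma solve_u {n m : Type*} [Fintype n] [Fintype m] [DecidableEq n] [DecidableEq m]
    {R : Type*} [CommRing R] (K : Matrix n m R) (G : Matrix m n R)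
    (h : IsUnit (1 - G * K).det) (u : Matrix n (Fin 1) R) (g : Matrix m (Fin 1) R)
    (hu : u = K * (g + G * u)) :
    u = K * (1 - G * K)⁻¹ * g := by
  have h2 : IsUnit (1 - K * G).det := by
    rwa [Matrix.det_one_sub_mul_comm]
  have key : (1 - K * G) * u = (1 - K * G) * (K * ((1 - G * K)⁻¹ * g)) := by
    have hu' : u = K * g + K * (G * u) := by
      conv_lhs => rw [hu]
      rw [Matrix.mul_add]
    have e1 : (1 - K * G) * u = K * g := by
      rw [Matrix.sub_mul, Matrix.one_mul, Matrix.mul_assoc]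
      exact sub_eq_iff_eq_add.mpr hu'
    have e2 : (1 - K * G) * (K * ((1 - G * K)⁻¹ * g)) = K * g := by
      have : (1 - K * G) * K = K * (1 - G * K) := by
        rw [Matrix.sub_mul, Matrix.mul_sub, Matrix.one_mul, Matrix.mul_one,
          Matrix.mul_assoc]
      calc (1 - K * G) * (K * ((1 - G * K)⁻¹ * g))
          = ((1 - K * G) * K) * ((1 - G * K)⁻¹ * g) := by rw [Matrix.mul_assoc]
        _ = K * ((1 - G * K) * ((1 - G * K)⁻¹ * g)) := by rw [this, Matrix.mul_assoc]
        _ = K * g := by rw [Matrix.mul_nonsing_inv_cancel_left _ _ h]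
    rw [e1, e2]
  have := congrArg (fun X => (1 - K * G)⁻¹ * X) key
  simpa [← Matrix.mul_assoc, Matrix.nonsing_inv_mul_cancel_left _ _ h2,
    Matrix.mul_assoc] using this

/-- Proposition 3 of the paper: under simultaneous implementation of output-rectifying
retrofit controllers, the entire map from the stacked disturbance `𝐝` to the stacked
evaluation output `𝐳` has the cascade structure with block-diagonal first stage. -/
theorem stmt_14 (ι : Type*) [Fintype ι] [DecidableEq ι] (R : Type*) [CommRing R]
    (kv kd ku kw kz ky : ι → ℕ)
    (Gwv : ∀ i, Matrix (Fin (kw i)) (Fin (kv i)) R)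
    (Gwd : ∀ i, Matrix (Fin (kw i)) (Fin (kd i)) R)
    (Gwu : ∀ i, Matrix (Fin (kw i)) (Fin (ku i)) R)
    (Gzv : ∀ i, Matrix (Fin (kz i)) (Fin (kv i)) R)
    (Gzd : ∀ i, Matrix (Fin (kz i)) (Fin (kd i)) R)
    (Gzu : ∀ i, Matrix (Fin (kz i)) (Fin (ku i)) R)
    (Gyv : ∀ i, Matrix (Fin (ky i)) (Fin (kv i)) R)
    (Gyd : ∀ i, Matrix (Fin (ky i)) (Fin (kd i)) R)
    (Gyu : ∀ i, Matrix (Fin (ky i)) (Fin (ku i)) R)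
    (Khat : ∀ i, Matrix (Fin (ku i)) (Fin (ky i)) R)
    (hKhat : ∀ i, IsUnit (1 - Gyu i * Khat i).det)
    (L : Matrix (Σ i, Fin (kv i)) (Σ i, Fin (kw i)) R)
    (hL : IsUnit (1 - L * Matrix.blockDiagonal' Gwv).det)
    (d : ∀ i, Matrix (Fin (kd i)) (Fin 1) R)
    (v : ∀ i, Matrix (Fin (kv i)) (Fin 1) R)
    (w : ∀ i, Matrix (Fin (kw i)) (Fin 1) R)
    (u : ∀ i, Matrix (Fin (ku i)) (Fin 1) R)
    (y : ∀ i, Matrix (Fin (ky i)) (Fin 1) R)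
    (z : ∀ i, Matrix (Fin (kz i)) (Fin 1) R)
    (hw : ∀ i, w i = Gwv i * v i + Gwd i * d i + Gwu i * u i)
    (hz : ∀ i, z i = Gzv i * v i + Gzd i * d i + Gzu i * u i)
    (hy : ∀ i, y i = Gyv i * v i + Gyd i * d i + Gyu i * u i)
    (hu : ∀ i, u i = Khat i * (y i - Gyv i * v i))
    (hv : stackVec v = L * stackVec w) :
    stackVec z =
      Matrix.blockDiagonal'
          (fun i => Gzd i + Gzu i * Khat i * (1 - Gyu i * Khat i)⁻¹ * Gyd i)
        * stackVec d
      + Matrix.blockDiagonal' Gzv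
          * (1 - L * Matrix.blockDiagonal' Gwv)⁻¹ * L
          * Matrix.blockDiagonal'
              (fun i => Gwd i + Gwu i * Khat i * (1 - Gyu i * Khat i)⁻¹ * Gyd i)
          * stackVec d := by

  -- per-component formula for u
  have hui : ∀ i, u i = Khat i * (1 - Gyu i * Khat i)⁻¹ * (Gyd i * d i) := by
    intro i
    have h' : u i = Khat i * (Gyd i * d i + Gyu i * u i) := by
      conv_lhs => rw [hu i, hy i]
      congr 1; abel
    exact solve_u _ _ (hKhat i) _ _ h'
  -- per-component formula for w and z
  have hwi : ∀ i, w i = Gwv i * v i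
      + (Gwd i + Gwu i * Khat i * (1 - Gyu i * Khat i)⁻¹ * Gyd i) * d i := by
    intro i
    rw [hw i, hui i]
    simp only [Matrix.add_mul, Matrix.mul_assoc, add_assoc]
  have hzi : ∀ i, z i = Gzv i * v i
      + (Gzd i + Gzu i * Khat i * (1 - Gyu i * Khat i)⁻¹ * Gyd i) * d i := by
    intro i
    rw [hz i, hui i]
    simp only [Matrix.add_mul, Matrix.mul_assoc, add_assoc]
  -- stacked equations
  have hws : stackVec w = Matrix.blockDiagonal' Gwv * stackVec v
      + Matrix.blockDiagonal'
          (fun i => Gwd i + Gwu i * Khat i * (1 - Gyu i * Khat i)⁻¹ * Gyd i) * stackVec d := by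
    rw [bd_mul_stack, bd_mul_stack]
    ext ⟨k, i⟩ o
    simp [stackVec, hwi k]
  have hzs : stackVec z = Matrix.blockDiagonal' Gzv * stackVec v
      + Matrix.blockDiagonal'
          (fun i => Gzd i + Gzu i * Khat i * (1 - Gyu i * Khat i)⁻¹ * Gyd i) * stackVec d := by
    rw [bd_mul_stack, bd_mul_stack]
    ext ⟨k, i⟩ o
    simp [stackVec, hzi k]
  -- solve for stacked v
  have hvs : stackVec v = (1 - L * Matrix.blockDiagonal' Gwv)⁻¹ * (L *
      (Matrix.blockDiagonal'
        (fun i => Gwd i + Gwu i * Khat i * (1 - Gyu i * Khat i)⁻¹ * Gyd i) * stackVec d)) := by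
    have e1 : (1 - L * Matrix.blockDiagonal' Gwv) * stackVec v =
        L * (Matrix.blockDiagonal'
          (fun i => Gwd i + Gwu i * Khat i * (1 - Gyu i * Khat i)⁻¹ * Gyd i) * stackVec d) := by
      have hv' : stackVec v = L *
          (Matrix.blockDiagonal'
            (fun i => Gwd i + Gwu i * Khat i * (1 - Gyu i * Khat i)⁻¹ * Gyd i) * stackVec d)
          + L * (Matrix.blockDiagonal' Gwv * stackVec v) := by
        conv_lhs => rw [hv, hws]
        rw [Matrix.mul_add, add_comm]
      rw [Matrix.sub_mul, Matrix.one_mul, Matrix.mul_assoc]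
      exact sub_eq_iff_eq_add.mpr hv'
    have := congrArg (fun X => (1 - L * Matrix.blockDiagonal' Gwv)⁻¹ * X) e1
    simpa [Matrix.nonsing_inv_mul_cancel_left _ _ hL] using this
  rw [hzs, hvs]
  rw [add_comm]
  congr 1
  simp [Matrix.mul_assoc]
end

section
/- Let A (n×n), L (n×m), P (k×n), P̄ (l×n), P† (n×k), P̄† (n×l) be real matrices with P†·P + P̄†·P̄ = I_n and P·L = 0. Over the field F = RatFunc ℝ of real rational functions with variable s, define the transfer matrix X(s) := P̂ − Res(P·A·P†)·(P·A·P̄†·P̄)^, where M̂ denotes entrywise application of the algebra map ℝ → F and Res(M) := (s•1 − M̂)⁻¹. Then X(s)·Res(A)·L̂ = 0, i.e., the output rectifier annihilates the transfer matrix G_yv(s) = (sI − A)⁻¹ L. -/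
open Matrix

set_option synthInstance.maxHeartbeats 1000000

/-- Entrywise application of the algebra map `ℝ → RatFunc ℝ` to a real matrix. -/
noncomputable def rmap {k n : ℕ} (M : Matrix (Fin k) (Fin n) ℝ) :
    Matrix (Fin k) (Fin n) (RatFunc ℝ) :=
  M.map (algebraMap ℝ (RatFunc ℝ))

/-- The resolvent `(s • 1 - M)⁻¹` of a square real matrix, over the field `RatFunc ℝ`. -/
noncomputable def Res {n : ℕ} (M : Matrix (Fin n) (Fin n) ℝ) :
    Matrix (Fin n) (Fin n) (RatFunc ℝ) :=
  ((RatFunc.X : RatFunc ℝ) • (1 : Matrix (Fin n) (Fin n) (RatFunc ℝ)) - rmap M)⁻¹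

lemma rmap_mul {a b c : ℕ} (M : Matrix (Fin a) (Fin b) ℝ) (N : Matrix (Fin b) (Fin c) ℝ) :
    rmap (M * N) = rmap M * rmap N := by
  simp [rmap, Matrix.map_mul]

lemma res_isUnit {n : ℕ} (M : Matrix (Fin n) (Fin n) ℝ) :
    IsUnit ((RatFunc.X : RatFunc ℝ) • (1 : Matrix (Fin n) (Fin n) (RatFunc ℝ)) - rmap M).det := by
  have h : (RatFunc.X : RatFunc ℝ) • (1 : Matrix (Fin n) (Fin n) (RatFunc ℝ)) - rmap M
      = (charmatrix M).map (algebraMap (Polynomial ℝ) (RatFunc ℝ)) := by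
    ext i j
    by_cases hij : i = j <;>
      simp [rmap, charmatrix_apply, Matrix.one_apply, hij, RatFunc.algebraMap_C,
        RatFunc.algebraMap_X, Matrix.diagonal]
  have hd : ((charmatrix M).map (algebraMap (Polynomial ℝ) (RatFunc ℝ))).det
      = algebraMap (Polynomial ℝ) (RatFunc ℝ) M.charpoly :=
    ((algebraMap (Polynomial ℝ) (RatFunc ℝ)).map_det _).symm
  rw [h, hd]
  apply IsUnit.mk0
  simp only [ne_eq, map_eq_zero_iff _ (RatFunc.algebraMap_injective ℝ)]
  exact (Matrix.charpoly_monic M).ne_zero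

lemma rmap_add {a b : ℕ} (M N : Matrix (Fin a) (Fin b) ℝ) :
    rmap (M + N) = rmap M + rmap N := by
  ext i j; simp [rmap, map_add]


/-- Identity (XGyv) in the proof of Lemma 4 (Appendix C): under `P L = 0`, the output
rectifier `X(s) = P - (sI - PAP†)⁻¹ P A P̄† P̄` annihilates `G_yv(s) = (sI - A)⁻¹ L`. -/
theorem stmt_16 (n m k l : ℕ)
    (A : Matrix (Fin n) (Fin n) ℝ) (L : Matrix (Fin n) (Fin m) ℝ)
    (P : Matrix (Fin k) (Fin n) ℝ) (Pbar : Matrix (Fin l) (Fin n) ℝ)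
    (Pdag : Matrix (Fin n) (Fin k) ℝ) (Pbardag : Matrix (Fin n) (Fin l) ℝ)
    (hcomp : Pdag * P + Pbardag * Pbar = 1)
    (hPL : P * L = 0) :
    (rmap P - Res (P * A * Pdag) * rmap (P * A * Pbardag * Pbar))
        * Res A * rmap L = 0 := by
  set s : RatFunc ℝ := RatFunc.X with hs
  set sA := s • (1 : Matrix (Fin n) (Fin n) (RatFunc ℝ)) - rmap A with hsA
  set sP := s • (1 : Matrix (Fin k) (Fin k) (RatFunc ℝ)) - rmap (P * A * Pdag) with hsP
  have hA : sA * Res A = 1 := Matrix.mul_nonsing_inv _ (res_isUnit A)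
  have hQ : Res (P * A * Pdag) * sP = 1 := Matrix.nonsing_inv_mul _ (res_isUnit _)
  have hPA : P * A = (P * A * Pdag) * P + (P * A * Pbardag) * Pbar := by
    calc P * A = P * A * (Pdag * P + Pbardag * Pbar) := by rw [hcomp, Matrix.mul_one]
    _ = (P * A * Pdag) * P + (P * A * Pbardag) * Pbar := by
        simp only [Matrix.mul_add, Matrix.mul_assoc]
  have e1 : rmap (P * A) = rmap (P * A * Pdag) * rmap P + rmap (P * A * Pbardag * Pbar) := by
    conv_lhs => rw [hPA, rmap_add, rmap_mul]
  have key : rmap P * sA = sP * rmap P - rmap (P * A * Pbardag * Pbar) := by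
    rw [hsA, hsP, Matrix.mul_sub, Matrix.sub_mul, Matrix.mul_smul, Matrix.smul_mul,
      Matrix.mul_one, Matrix.one_mul, ← rmap_mul P A, e1]
    abel
  set T := Res A * rmap L with hT
  have h0 : rmap P * rmap L = 0 := by
    rw [← rmap_mul, hPL]; ext i j; simp [rmap]
  have h1 : sP * (rmap P * T) - rmap (P * A * Pbardag * Pbar) * T = 0 := by
    calc sP * (rmap P * T) - rmap (P * A * Pbardag * Pbar) * T
        = (sP * rmap P) * T - rmap (P * A * Pbardag * Pbar) * T := by rw [← Matrix.mul_assoc sP (rmap P) T]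
      _ = (sP * rmap P - rmap (P * A * Pbardag * Pbar)) * T := (Matrix.sub_mul _ _ _).symm
      _ = rmap P * sA * T := by rw [key]
      _ = rmap P * (sA * (Res A * rmap L)) := by rw [hT, Matrix.mul_assoc]
      _ = rmap P * ((sA * Res A) * rmap L) := by rw [Matrix.mul_assoc]
      _ = rmap P * rmap L := by rw [hA, Matrix.one_mul]
      _ = 0 := h0
  have h2 : rmap (P * A * Pbardag * Pbar) * T = sP * (rmap P * T) := (sub_eq_zero.mp h1).symm
  calc (rmap P - Res (P * A * Pdag) * rmap (P * A * Pbardag * Pbar)) * Res A * rmap L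
      = rmap P * T - Res (P * A * Pdag) * (rmap (P * A * Pbardag * Pbar) * T) := by
        simp only [Matrix.sub_mul, Matrix.mul_assoc, hT]
    _ = rmap P * T - (Res (P * A * Pdag) * sP) * (rmap P * T) := by
        rw [h2, ← Matrix.mul_assoc (Res (P * A * Pdag)) sP (rmap P * T)]
    _ = 0 := by rw [hQ, Matrix.one_mul, sub_self]
end

section
/- Let A (n×n), P (k×n), P̄ (l×n), P† (n×k), P̄† (n×l) be real matrices with P†·P + P̄†·P̄ = I_n. Over the field F = RatFunc ℝ define X(s) := P̂ − Res(P·A·P†)·(P·A·P̄†·P̄)^ and X†(s) := Res(A)·(P̄†·P̄·A·P†)^ + (P†)^, where M̂ denotes entrywise application of the algebra map ℝ → F and Res(M) := (s•1 − M̂)⁻¹. Then X†(s)·X(s) = Res(A)·(P̄†·P̄·A·P†·P − P†·P·A·P̄†·P̄)^ + (P†·P)^. -/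
open Matrix

set_option synthInstance.maxHeartbeats 1000000

set_option maxHeartbeats 1000000

lemma rmap_one {a : ℕ} : rmap (1 : Matrix (Fin a) (Fin a) ℝ) = 1 := by
  simp [rmap]

lemma rmap_sub {a b : ℕ} (M N : Matrix (Fin a) (Fin b) ℝ) :
    rmap (M - N) = rmap M - rmap N := by
  simp [rmap, Matrix.map_sub]

lemma det_isUnit {m : ℕ} (M : Matrix (Fin m) (Fin m) ℝ) :
    IsUnit ((RatFunc.X : RatFunc ℝ) • (1 : Matrix (Fin m) (Fin m) (RatFunc ℝ)) - rmap M).det := by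
  have heq : (RatFunc.X : RatFunc ℝ) • (1 : Matrix (Fin m) (Fin m) (RatFunc ℝ)) - rmap M
      = (charmatrix M).map (algebraMap (Polynomial ℝ) (RatFunc ℝ)) := by
    ext i j
    by_cases h : i = j
    · subst h
      simp [charmatrix_apply_eq, rmap, Matrix.one_apply, RatFunc.algebraMap_X,
        RatFunc.algebraMap_C, RatFunc.algebraMap_eq_C]
    · simp [charmatrix_apply_ne _ _ _ h, rmap, Matrix.one_apply, h,
        RatFunc.algebraMap_C, RatFunc.algebraMap_eq_C]
  rw [heq, ← RingHom.mapMatrix_apply, ← RingHom.map_det]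
  have hcp : (charmatrix M).det = M.charpoly := rfl
  rw [hcp, isUnit_iff_ne_zero]
  exact (map_ne_zero_iff _ (RatFunc.algebraMap_injective ℝ)).mpr (M.charpoly_monic).ne_zero

lemma Res_mul {m : ℕ} (M : Matrix (Fin m) (Fin m) ℝ) :
    Res M * ((RatFunc.X : RatFunc ℝ) • (1 : Matrix (Fin m) (Fin m) (RatFunc ℝ)) - rmap M) = 1 :=
  Matrix.nonsing_inv_mul _ (det_isUnit M)

lemma mul_Res {m : ℕ} (M : Matrix (Fin m) (Fin m) ℝ) :
    ((RatFunc.X : RatFunc ℝ) • (1 : Matrix (Fin m) (Fin m) (RatFunc ℝ)) - rmap M) * Res M = 1 :=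
  Matrix.mul_nonsing_inv _ (det_isUnit M)

lemma abstract {F : Type} [CommRing F] {n k l : ℕ} (s : F)
    (r a : Matrix (Fin n) (Fin n) F)
    (rk : Matrix (Fin k) (Fin k) F)
    (p : Matrix (Fin k) (Fin n) F) (q : Matrix (Fin n) (Fin k) F)
    (pb : Matrix (Fin l) (Fin n) F) (pbd : Matrix (Fin n) (Fin l) F)
    (h1 : r * (s • (1 : Matrix (Fin n) (Fin n) F) - a) = 1)
    (h2 : (s • (1 : Matrix (Fin k) (Fin k) F) - p * a * q) * rk = 1)
    (hcomp : q * p + pbd * pb = 1) :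
    (r * (pbd * pb * a * q) + q) * (p - rk * (p * a * pbd * pb)) =
      r * (pbd * pb * a * q * p - q * p * a * pbd * pb) + q * p := by
  have hpbd : pbd * pb = 1 - q * p := by
    rw [← hcomp]; abel
  have h1' : s • r - r * a = 1 := by
    rw [← h1, Matrix.mul_sub, Matrix.mul_smul, Matrix.mul_one]
  have hra : r * a = s • r - 1 := by
    rw [← h1']; abel
  have hraq : r * (a * q) = s • (r * q) - q := by
    calc r * (a * q) = r * a * q := by rw [Matrix.mul_assoc]
      _ = (s • r - 1) * q := by rw [hra]
      _ = s • (r * q) - q := by rw [Matrix.sub_mul, Matrix.smul_mul, Matrix.one_mul]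
  have key : (r * (pbd * pb * a * q) + q) * rk = r * q := by
    have step : r * (pbd * pb * a * q) + q
        = r * q * (s • (1 : Matrix (Fin k) (Fin k) F) - p * a * q) := by
      rw [hpbd]
      simp only [Matrix.mul_sub, Matrix.sub_mul, Matrix.mul_add, Matrix.add_mul,
        Matrix.mul_assoc, Matrix.mul_one, Matrix.one_mul, Matrix.mul_smul, Matrix.smul_mul,
        hraq]
      abel
    rw [step, Matrix.mul_assoc, h2, Matrix.mul_one]
  calc (r * (pbd * pb * a * q) + q) * (p - rk * (p * a * pbd * pb))
      = (r * (pbd * pb * a * q) + q) * p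
        - ((r * (pbd * pb * a * q) + q) * rk) * (p * a * pbd * pb) := by
        simp only [Matrix.mul_sub, Matrix.sub_mul, Matrix.mul_add, Matrix.add_mul,
          Matrix.mul_assoc]
    _ = (r * (pbd * pb * a * q) + q) * p - (r * q) * (p * a * pbd * pb) := by rw [key]
    _ = r * (pbd * pb * a * q * p - q * p * a * pbd * pb) + q * p := by
        simp only [Matrix.mul_sub, Matrix.sub_mul, Matrix.mul_add, Matrix.add_mul,
          Matrix.mul_assoc]
        abel

/-- Identity (XXdag) in the proof of Lemma 4 (Appendix C):
`X†(s) X(s) = (sI - A)⁻¹ (P̄†P̄AP†P - P†PAP̄†P̄) + P†P`. -/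
theorem stmt_18 (n k l : ℕ)
    (A : Matrix (Fin n) (Fin n) ℝ)
    (P : Matrix (Fin k) (Fin n) ℝ) (Pbar : Matrix (Fin l) (Fin n) ℝ)
    (Pdag : Matrix (Fin n) (Fin k) ℝ) (Pbardag : Matrix (Fin n) (Fin l) ℝ)
    (hcomp : Pdag * P + Pbardag * Pbar = 1) :
    (Res A * rmap (Pbardag * Pbar * A * Pdag) + rmap Pdag)
        * (rmap P - Res (P * A * Pdag) * rmap (P * A * Pbardag * Pbar)) =
      Res A * rmap (Pbardag * Pbar * A * Pdag * P - Pdag * P * A * Pbardag * Pbar)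
        + rmap (Pdag * P) := by
  have hcomp' : rmap Pdag * rmap P + rmap Pbardag * rmap Pbar = 1 := by
    rw [← rmap_mul, ← rmap_mul, ← rmap_add, hcomp, rmap_one]
  have h2 : ((RatFunc.X : RatFunc ℝ) • (1 : Matrix (Fin k) (Fin k) (RatFunc ℝ))
      - rmap P * rmap A * rmap Pdag) * Res (P * A * Pdag) = 1 := by
    rw [← rmap_mul, ← rmap_mul]; exact mul_Res _
  have := abstract (RatFunc.X : RatFunc ℝ) (Res A) (rmap A) (Res (P * A * Pdag))
    (rmap P) (rmap Pdag) (rmap Pbar) (rmap Pbardag) (Res_mul A) h2 hcomp'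
  simpa only [rmap_mul, rmap_sub] using this
end

section
/- Let A (n×n), P (k×n), P̄ (l×n), P† (n×k), P̄† (n×l) be real matrices with P†·P + P̄†·P̄ = I_n. Over the field F = RatFunc ℝ define X(s) := P̂ − Res(P·A·P†)·(P·A·P̄†·P̄)^, X̄(s) := (P̄)^ − Res(P̄·A·P̄†)·(P̄·A·P†·P)^, X†(s) := Res(A)·(P̄†·P̄·A·P†)^ + (P†)^, and X̄†(s) := Res(A)·(P†·P·A·P̄†)^ + (P̄†)^, where M̂ denotes entrywise application of the algebra map ℝ → F and Res(M) := (s•1 − M̂)⁻¹. Then X†(s)·X(s) + X̄†(s)·X̄(s) = I_n (the identity matrix over F). -/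
open Matrix

set_option synthInstance.maxHeartbeats 1000000
set_option maxHeartbeats 1000000

lemma sub_helper {α : Type*} [AddCommGroup α] {x y L R : α} (h : x = y) (h2 : L - R = x - y) :
    L = R := by
  rw [h, sub_self, sub_eq_zero] at h2
  exact h2

lemma charm {m : ℕ} (M : Matrix (Fin m) (Fin m) ℝ) :
    (RatFunc.X : RatFunc ℝ) • (1 : Matrix (Fin m) (Fin m) (RatFunc ℝ)) - rmap M
      = (charmatrix M).map (algebraMap (Polynomial ℝ) (RatFunc ℝ)) := by
  ext i j
  by_cases h : i = j <;>
    simp [h, charmatrix_apply_eq, charmatrix_apply_ne, rmap, Matrix.sub_apply,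
      Matrix.smul_apply, Matrix.one_apply, RatFunc.algebraMap_X, RatFunc.algebraMap_C]

lemma term_eq {n k l : ℕ}
    (A : Matrix (Fin n) (Fin n) ℝ)
    (P : Matrix (Fin k) (Fin n) ℝ) (Pbar : Matrix (Fin l) (Fin n) ℝ)
    (Pdag : Matrix (Fin n) (Fin k) ℝ) (Pbardag : Matrix (Fin n) (Fin l) ℝ)
    (hcomp : Pdag * P + Pbardag * Pbar = 1) :
    (Res A * rmap (Pbardag * Pbar * A * Pdag) + rmap Pdag)
        * (rmap P - Res (P * A * Pdag) * rmap (P * A * Pbardag * Pbar))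
      = Res A * ((RatFunc.X : RatFunc ℝ) • rmap (Pdag * P) - rmap (Pdag * P * A)) := by
  have hResA : Res A * ((RatFunc.X : RatFunc ℝ) • (1 : Matrix (Fin n) (Fin n) (RatFunc ℝ))
      - rmap A) = 1 := nonsing_inv_mul _ (det_isUnit A)
  have hResP : ((RatFunc.X : RatFunc ℝ) • (1 : Matrix (Fin k) (Fin k) (RatFunc ℝ))
      - rmap (P * A * Pdag)) * Res (P * A * Pdag) = 1 := mul_nonsing_inv _ (det_isUnit _)
  have hco : rmap Pdag * rmap P + rmap Pbardag * rmap Pbar = 1 := by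
    rw [← rmap_mul, ← rmap_mul, ← rmap_add, hcomp, rmap_one]
  set RA := Res A
  set RP := Res (P * A * Pdag)
  simp only [rmap_mul, Matrix.mul_assoc] at hResP ⊢
  set a := rmap A
  set p := rmap P
  set q := rmap Pbar
  set d := rmap Pdag
  set e := rmap Pbardag
  -- hResA : RA * (X • 1 - a) = 1
  -- hResP : (X • 1 - p * (a * d)) * RP = 1
  -- hco : d * p + e * q = 1
  -- goal : (RA * (e * (q * (a * d))) + d) * (p - RP * (p * (a * (e * q))))
  --          = RA * (X • (d * p) - d * (p * a))
  have h2 : d * (p * (a * d)) + e * (q * (a * d)) = a * d := by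
    have h := congrArg (· * (a * d)) hco
    simp only [Matrix.add_mul, Matrix.one_mul, Matrix.mul_assoc] at h
    exact h
  have h3 : e * (q * (a * d)) = a * d - d * (p * (a * d)) :=
    sub_helper h2 (by abel)
  have hXd : (RatFunc.X : RatFunc ℝ) • (RA * d) - RA * (a * d) = d := by
    have h := congrArg (· * d) hResA
    simp only [Matrix.sub_mul, Matrix.smul_mul, Matrix.one_mul, Matrix.mul_assoc,
      Matrix.mul_sub, Matrix.mul_smul] at h
    exact h
  have key1 : RA * (e * (q * (a * d))) + d
      = RA * (d * ((RatFunc.X : RatFunc ℝ) • (1 : Matrix (Fin k) (Fin k) (RatFunc ℝ))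
          - p * (a * d))) := by
    have expand : RA * (d * ((RatFunc.X : RatFunc ℝ) • (1 : Matrix (Fin k) (Fin k) (RatFunc ℝ))
          - p * (a * d)))
        = (RatFunc.X : RatFunc ℝ) • (RA * d) - RA * (d * (p * (a * d))) := by
      simp only [Matrix.mul_sub, Matrix.mul_smul, Matrix.mul_one, Matrix.mul_assoc]
    rw [h3, expand, Matrix.mul_sub]
    exact sub_helper hXd.symm (by abel)
  rw [key1, Matrix.mul_assoc RA, Matrix.mul_assoc d]
  congr 1
  have hc : ((RatFunc.X : RatFunc ℝ) • (1 : Matrix (Fin k) (Fin k) (RatFunc ℝ))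
        - p * (a * d)) * (RP * (p * (a * (e * q)))) = p * (a * (e * q)) := by
    rw [← Matrix.mul_assoc, hResP, Matrix.one_mul]
  rw [Matrix.mul_sub, hc]
  have h5 : d * (p * (a * (d * p))) + d * (p * (a * (e * q))) = d * (p * a) := by
    have h := congrArg (fun M => d * (p * (a * M))) hco
    simp only [Matrix.mul_add, Matrix.mul_one] at h
    exact h
  simp only [Matrix.mul_sub, Matrix.sub_mul, Matrix.smul_mul, Matrix.mul_smul,
    Matrix.one_mul, Matrix.mul_one, Matrix.mul_assoc]
  exact sub_helper h5.symm (by abel)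

/-- The unimodularity relation `U⁻¹ U = I` with `U = [X; X̄]`, `U⁻¹ = [X†, X̄†]`, i.e.
`X†(s) X(s) + X̄†(s) X̄(s) = I` (proof of Lemma 4, Appendix C). -/
theorem stmt_19 (n k l : ℕ)
    (A : Matrix (Fin n) (Fin n) ℝ)
    (P : Matrix (Fin k) (Fin n) ℝ) (Pbar : Matrix (Fin l) (Fin n) ℝ)
    (Pdag : Matrix (Fin n) (Fin k) ℝ) (Pbardag : Matrix (Fin n) (Fin l) ℝ)
    (hcomp : Pdag * P + Pbardag * Pbar = 1) :
    (Res A * rmap (Pbardag * Pbar * A * Pdag) + rmap Pdag)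
        * (rmap P - Res (P * A * Pdag) * rmap (P * A * Pbardag * Pbar))
      + (Res A * rmap (Pdag * P * A * Pbardag) + rmap Pbardag)
        * (rmap Pbar - Res (Pbar * A * Pbardag) * rmap (Pbar * A * Pdag * P)) =
      1 := by
  have hcomp' : Pbardag * Pbar + Pdag * P = 1 := by rw [add_comm]; exact hcomp
  rw [term_eq A P Pbar Pdag Pbardag hcomp, term_eq A Pbar P Pbardag Pdag hcomp']
  have hResA : Res A * ((RatFunc.X : RatFunc ℝ) • (1 : Matrix (Fin n) (Fin n) (RatFunc ℝ))
      - rmap A) = 1 := nonsing_inv_mul _ (det_isUnit A)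
  rw [← Matrix.mul_add, ← hResA]
  congr 1
  have e1 : rmap (Pdag * P) + rmap (Pbardag * Pbar) = 1 := by
    rw [← rmap_add, hcomp, rmap_one]
  have e2 : rmap (Pdag * P * A) + rmap (Pbardag * Pbar * A) = rmap A := by
    rw [← rmap_add, ← Matrix.add_mul, hcomp, Matrix.one_mul]
  rw [← e1, ← e2, smul_add]
  abel
end
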